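/- For every optimal conditional machine U there exists a constant c ∈ ℕ such that for every string x with C(x) = n and every string p with |p| = n and U(p, Λ) = x, letting y be the prefix of p of length ⌈n/2⌉, one has |C(x|y) − ⌊n/2⌋| ≤ c · log n (difference in ℤ). -/

import Mathlib

/-- A string is a finite binary string. -/
abbrev Str : Type := List Bool

/-- A conditional machine: a partial computable function mapping a pair of
strings `(p, y)` to a string. -/
abbrev CondMachine : Type := {V : Str × Str →. Str // Partrec V}

/-- `condC V x y` is `C_V(x|y)`: the least length of a program `p` with
`V (p, y) = x`, as an element of `ℕ∞` (it is `⊤` if no such `p` exists). -/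
noncomputable def condC (V : CondMachine) (x y : Str) : ℕ∞ :=
  sInf {n : ℕ∞ | ∃ p : Str, x ∈ V.1 (p, y) ∧ (p.length : ℕ∞) = n}

/-- A conditional machine `U` is optimal if for every conditional machine `V`
there is a constant `d` with `C_U(x|y) ≤ C_V(x|y) + d` for all `x, y`. -/
def OptimalMachine (U : CondMachine) : Prop :=
  ∀ V : CondMachine, ∃ d : ℕ, ∀ x y : Str, condC U x y ≤ condC V x y + (d : ℕ∞)

/-- For an optimal machine all complexities are finite natural numbers. -/
noncomputable def KC (U : CondMachine) (x y : Str) : ℕ := (condC U x y).toNat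

/-- `log2 n = Nat.log 2 (n + 2)`, so `log2 n ≥ 1`. -/
def log2 (n : ℕ) : ℕ := Nat.log 2 (n + 2)

/-! The upper bound is immediate: the second half of `p`, of length `⌊n/2⌋`, describes `x`
given its first half `y` (run `U` on `y ++ q`). For the lower bound, a shortest description
`q` of `x` given `y`, preceded by a self-delimiting code of `y` of length `|y| + O(log |y|)`,
describes `x` outright, so `n = C(x) ≤ C(x|y) + ⌈n/2⌉ + O(log n)`. -/

def natToStr (n : ℕ) : Str := (Nat.digits 2 n).map (· == 1)

def strToNat (s : Str) : ℕ := Nat.ofDigits 2 (s.map Bool.toNat)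

theorem strToNat_natToStr (n : ℕ) : strToNat (natToStr n) = n := by
  conv_rhs => rw [← Nat.ofDigits_digits 2 n]
  rw [strToNat, natToStr, List.map_map]
  congr 1
  refine (List.map_congr_left fun d hd => ?_).trans (List.map_id _)
  have := Nat.digits_lt_base one_lt_two hd
  interval_cases d <;> rfl

theorem length_natToStr_le (n : ℕ) : (natToStr n).length ≤ Nat.log 2 n + 1 := by
  rw [natToStr, List.length_map, Nat.digits_length_le_iff one_lt_two]
  exact Nat.lt_pow_succ_log_self one_lt_two n

theorem primrec_strToNat : Primrec strToNat := by
  have hfold : Primrec fun l : List ℕ => l.foldr (fun d m => d + 2 * m) 0 :=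
    Primrec.list_foldr Primrec.id (Primrec.const 0) <| Primrec.to₂ <|
      Primrec.nat_add.comp (Primrec.fst.comp Primrec.snd)
        (Primrec.nat_mul.comp (Primrec.const 2) (Primrec.snd.comp Primrec.snd))
  have htoNat : Primrec Bool.toNat :=
    (Primrec.cond Primrec.id (Primrec.const 1) (Primrec.const 0)).of_eq fun b => by
      cases b <;> rfl
  exact (hfold.comp (Primrec.list_map Primrec.id (htoNat.comp Primrec.snd).to₂)).of_eq
    fun s => (Nat.ofDigits_eq_foldr _ _).symm

/-- `pairCode y q = 1ᵏ 0 b y q`, where `b` is the binary expansion of `|y|` and `k = |b|`. -/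
def pairCode (y q : Str) : Str :=
  List.replicate (natToStr y.length).length true ++ false :: (natToStr y.length ++ y ++ q)

def pairDecode (r : Str) : Str × Str :=
  let k := r.findIdx (! ·)
  let s := r.drop (k + 1)
  let m := strToNat (s.take k)
  ((s.drop k).take m, (s.drop k).drop m)

theorem findIdx_not_replicate_true_append (k : ℕ) (r : Str) :
    (List.replicate k true ++ false :: r).findIdx (! ·) = k := by
  induction k with
  | zero => simp [List.findIdx_cons]
  | succ k ih => simp [List.replicate_succ, List.findIdx_cons, ih]

theorem pairDecode_pairCode (y q : Str) : pairDecode (pairCode y q) = (y, q) := by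
  simp [pairDecode, pairCode, findIdx_not_replicate_true_append, List.drop_append,
    strToNat_natToStr]

theorem length_pairCode (y q : Str) :
    (pairCode y q).length = 2 * (natToStr y.length).length + 1 + y.length + q.length := by
  simp only [pairCode, List.length_append, List.length_replicate, List.length_cons]
  ring

theorem primrec_pairDecode : Primrec pairDecode := by
  have hk : Primrec fun r : Str => r.findIdx (! ·) :=
    Primrec.list_findIdx Primrec.id (Primrec.not.comp Primrec.snd).to₂
  have hs : Primrec fun r : Str => r.drop (r.findIdx (! ·) + 1) :=
    Primrec.list_drop.comp (Primrec.succ.comp hk) Primrec.id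
  have ht := Primrec.list_drop.comp hk hs
  have hm := primrec_strToNat.comp (Primrec.list_take.comp hk hs)
  exact Primrec.pair (Primrec.list_take.comp hm ht) (Primrec.list_drop.comp hm ht)

theorem condC_le_length {V : CondMachine} {x y p : Str} (h : x ∈ V.1 (p, y)) :
    condC V x y ≤ p.length :=
  sInf_le ⟨p, h, rfl⟩

namespace OptimalMachine

variable {U : CondMachine} (hU : OptimalMachine U)
include hU

theorem condC_ne_top (x y : Str) : condC U x y ≠ ⊤ := by
  obtain ⟨d, hd⟩ := hU ⟨fun z => Part.some z.1, Computable.fst⟩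
  refine ne_top_of_le_ne_top ?_ (hd x y)
  exact WithTop.add_ne_top.2 ⟨ne_top_of_le_ne_top (ENat.natCast_ne_top _)
    (condC_le_length (Part.mem_some x)), ENat.natCast_ne_top d⟩

theorem natCast_KC (x y : Str) : (KC U x y : ℕ∞) = condC U x y :=
  ENat.natCast_toNat (hU.condC_ne_top x y)

theorem exists_mem_length_eq_KC (x y : Str) :
    ∃ p, x ∈ U.1 (p, y) ∧ p.length = KC U x y := by
  have hne : {n : ℕ∞ | ∃ p : Str, x ∈ U.1 (p, y) ∧ (p.length : ℕ∞) = n}.Nonempty := by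
    by_contra h
    exact hU.condC_ne_top x y (by rw [condC, Set.not_nonempty_iff_eq_empty.1 h, sInf_empty])
  obtain ⟨p, hp, hlen⟩ := csInf_mem hne
  exact ⟨p, hp, by exact_mod_cast hlen.trans (hU.natCast_KC x y).symm⟩

theorem exists_KC_le (V : CondMachine) :
    ∃ d : ℕ, ∀ x y p, x ∈ V.1 (p, y) → KC U x y ≤ p.length + d := by
  obtain ⟨d, hd⟩ := hU V
  refine ⟨d, fun x y p h => ?_⟩
  have : condC U x y ≤ p.length + d := (hd x y).trans (by gcongr; exact condC_le_length h)
  rw [← hU.natCast_KC] at this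
  exact_mod_cast this

theorem exists_KC_take_le :
    ∃ d : ℕ, ∀ x p k, x ∈ U.1 (p, []) → KC U x (p.take k) ≤ (p.drop k).length + d := by
  obtain ⟨d, hd⟩ := hU.exists_KC_le ⟨fun z => U.1 (z.2 ++ z.1, []),
    U.2.comp ((Computable.list_append.comp Computable.snd Computable.fst).pair
      (Computable.const []))⟩
  exact ⟨d, fun x p k h => hd x _ _ (by simpa using h)⟩

theorem exists_KC_nil_le_KC_add_length :
    ∃ d : ℕ, ∀ x y, KC U x [] ≤ KC U x y + y.length + 2 * Nat.log 2 y.length + d := by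
  have hdecode : Primrec fun r => (pairDecode r).swap :=
    (Primrec.snd.pair Primrec.fst).comp primrec_pairDecode
  obtain ⟨d, hd⟩ := hU.exists_KC_le ⟨fun z => U.1 (pairDecode z.1).swap,
    U.2.comp (hdecode.to_comp.comp Computable.fst)⟩
  refine ⟨d + 3, fun x y => ?_⟩
  obtain ⟨q, hq, hlen⟩ := hU.exists_mem_length_eq_KC x y
  have hcode := hd x [] (pairCode y q) (by simpa [pairDecode_pairCode] using hq)
  have hbits := length_natToStr_le y.length
  rw [length_pairCode] at hcode
  omega

end OptimalMachine

/-- If `p` is a shortest description of `x` (with `C(x) = n`), then the first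
half of `p` is a string `y` with `C(x|y) = n/2 + O(log n)`. -/
theorem condC_half_description (U : CondMachine) (hU : OptimalMachine U) :
    ∃ c : ℕ, ∀ (x p : Str), ∀ n : ℕ, KC U x [] = n →
      p.length = n → x ∈ U.1 (p, []) →
      |(KC U x (p.take ((n + 1) / 2)) : ℤ) - ((n / 2 : ℕ) : ℤ)| ≤ (c : ℤ) * log2 n := by
  obtain ⟨d₁, hd₁⟩ := hU.exists_KC_take_le
  obtain ⟨d₂, hd₂⟩ := hU.exists_KC_nil_le_KC_add_length
  refine ⟨d₁ + d₂ + 2, fun x p n hx hp hxp => ?_⟩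
  have hupper : KC U x (p.take ((n + 1) / 2)) ≤ n / 2 + d₁ := by
    have := hd₁ x p ((n + 1) / 2) hxp
    rw [List.length_drop, hp] at this
    omega
  have hlower : n / 2 ≤ KC U x (p.take ((n + 1) / 2)) + 2 * log2 n + d₂ := by
    have hy : (p.take ((n + 1) / 2)).length = (n + 1) / 2 := by simp [hp]; omega
    have hlog : Nat.log 2 ((n + 1) / 2) ≤ log2 n := Nat.log_mono_right (by omega)
    have := hd₂ x (p.take ((n + 1) / 2))
    rw [hy] at this
    omega
  have hlog_pos : 1 ≤ log2 n := Nat.log_pos one_lt_two (by omega)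
  have hd₁_le : d₁ ≤ (d₁ + d₂ + 2) * log2 n := by nlinarith
  have hd₂_le : 2 * log2 n + d₂ ≤ (d₁ + d₂ + 2) * log2 n := by nlinarith
  rw [← Nat.cast_mul, abs_sub_le_iff]
  constructor <;> omega
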